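/- arXiv:1908.02264 — 3 statements merged into one kernel-verified Lean document; each statement's English description precedes it below -/
import Mathlib

section
/- For real numbers α ≥ 1 and β ≥ 1, the function f(x,y) = ((x+y)^α − x^α)^β / (x^{(α−1)β} y^β + y^{αβ}) is bounded on (0,∞)², i.e. there exists a constant C > 0 such that ((x+y)^α − x^α)^β ≤ C (x^{(α−1)β} y^β + y^{αβ}) for all x, y ≥ 0. -/
lemma mvt_rpow (α : ℝ) (hα : 1 ≤ α) {a b : ℝ} (hb : 0 ≤ b) (hab : b ≤ a) :
    a ^ α - b ^ α ≤ α * a ^ (α - 1) * (a - b) := by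
  rcases eq_or_lt_of_le hab with rfl | h
  · simp
  · obtain ⟨c, hc, hc'⟩ := exists_hasDerivAt_eq_slope (fun x => x ^ α)
      (fun x => α * x ^ (α - 1)) h
      (fun x _ => (Real.hasDerivAt_rpow_const (p := α) (Or.inr hα)).continuousAt.continuousWithinAt)
      (fun x _ => Real.hasDerivAt_rpow_const (Or.inr hα))
    have hc0 : 0 ≤ c := le_trans hb hc.1.le
    have hceq : a ^ α - b ^ α = α * c ^ (α - 1) * (a - b) := by
      rw [eq_div_iff (by linarith : a - b ≠ 0)] at hc'
      linarith
    have hcle : c ^ (α - 1) ≤ a ^ (α - 1) :=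
      Real.rpow_le_rpow hc0 hc.2.le (by linarith)
    have hα0 : (0 : ℝ) ≤ α := by linarith
    rw [hceq]
    have : α * c ^ (α - 1) ≤ α * a ^ (α - 1) := by
      exact mul_le_mul_of_nonneg_left hcle hα0
    nlinarith

theorem stmt_0 (α β : ℝ) (hα : 1 ≤ α) (hβ : 1 ≤ β) :
    ∃ C : ℝ, 0 < C ∧ ∀ x y : ℝ, 0 ≤ x → 0 ≤ y →
      ((x + y) ^ α - x ^ α) ^ β ≤ C * (x ^ ((α - 1) * β) * y ^ β + y ^ (α * β)) := by
  have hα0 : (0 : ℝ) < α := by linarith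
  have hβ0 : (0 : ℝ) ≤ β := by linarith
  have h2α : (0 : ℝ) < 2 ^ α := Real.rpow_pos_of_pos (by norm_num) α
  refine ⟨(α * 2 ^ α) ^ β, Real.rpow_pos_of_pos (by positivity) β, ?_⟩
  intro x y hx hy
  set C := (α * 2 ^ α) ^ β with hC
  have hC0 : 0 < C := Real.rpow_pos_of_pos (by positivity) β
  have hL0 : 0 ≤ (x + y) ^ α - x ^ α :=
    sub_nonneg.2 (Real.rpow_le_rpow hx (by linarith) (by linarith))
  set A := x ^ ((α - 1) * β) * y ^ β with hA
  set B := y ^ (α * β) with hB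
  have hA0 : 0 ≤ A := by positivity
  have hB0 : 0 ≤ B := by positivity
  rcases le_total x y with hxy | hxy
  · -- x ≤ y : bound by 2^α y^α
    have h1 : (x + y) ^ α - x ^ α ≤ 2 ^ α * y ^ α := by
      have h1a : (x + y) ^ α ≤ (2 * y) ^ α :=
        Real.rpow_le_rpow (by linarith) (by linarith) (by linarith)
      have h1b : (2 * y) ^ α = 2 ^ α * y ^ α := Real.mul_rpow (by norm_num) hy
      have h1c : 0 ≤ x ^ α := Real.rpow_nonneg hx α
      linarith [h1a, h1c, h1b ▸ h1a]
    have h2 : ((x + y) ^ α - x ^ α) ^ β ≤ (2 ^ α * y ^ α) ^ β :=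
      Real.rpow_le_rpow hL0 h1 hβ0
    have h3 : (2 ^ α * y ^ α) ^ β = (2 ^ α) ^ β * B := by
      rw [Real.mul_rpow h2α.le (Real.rpow_nonneg hy α), ← Real.rpow_mul hy]
    have h4 : (2 ^ α) ^ β ≤ C := by
      apply Real.rpow_le_rpow h2α.le _ hβ0
      nlinarith
    calc ((x + y) ^ α - x ^ α) ^ β ≤ (2 ^ α) ^ β * B := by rw [← h3]; exact h2
      _ ≤ C * B := mul_le_mul_of_nonneg_right h4 hB0
      _ ≤ C * (A + B) := by nlinarith
  · -- y ≤ x : use MVT bound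
    have h1 : (x + y) ^ α - x ^ α ≤ α * (x + y) ^ (α - 1) * y := by
      have := mvt_rpow α hα hx (by linarith : x ≤ x + y)
      simpa using this
    have h2 : (x + y) ^ (α - 1) ≤ 2 ^ (α - 1) * x ^ (α - 1) := by
      have h2a : (x + y) ^ (α - 1) ≤ (2 * x) ^ (α - 1) :=
        Real.rpow_le_rpow (by linarith) (by linarith) (by linarith)
      rwa [Real.mul_rpow (by norm_num) hx] at h2a
    have h2' : (2 : ℝ) ^ (α - 1) ≤ 2 ^ α :=
      Real.rpow_le_rpow_of_exponent_le (by norm_num) (by linarith)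
    have hxα : 0 ≤ x ^ (α - 1) := Real.rpow_nonneg hx _
    have h2b : (x + y) ^ (α - 1) ≤ 2 ^ α * x ^ (α - 1) := by nlinarith
    have h3 : (x + y) ^ α - x ^ α ≤ α * 2 ^ α * (x ^ (α - 1) * y) := by
      have h2c := mul_le_mul_of_nonneg_right
        (mul_le_mul_of_nonneg_left h2b hα0.le) hy
      calc (x + y) ^ α - x ^ α ≤ α * (x + y) ^ (α - 1) * y := h1
        _ ≤ α * (2 ^ α * x ^ (α - 1)) * y := h2c
        _ = α * 2 ^ α * (x ^ (α - 1) * y) := by ring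
    have h4 : ((x + y) ^ α - x ^ α) ^ β ≤ (α * 2 ^ α * (x ^ (α - 1) * y)) ^ β :=
      Real.rpow_le_rpow hL0 h3 hβ0
    have h5 : (α * 2 ^ α * (x ^ (α - 1) * y)) ^ β = C * A := by
      rw [Real.mul_rpow (by positivity) (by positivity),
        Real.mul_rpow hxα hy, ← Real.rpow_mul hx]
    calc ((x + y) ^ α - x ^ α) ^ β ≤ C * A := h5 ▸ h4
      _ ≤ C * (A + B) := by nlinarith
end

section
/- Let (X,μ) be a σ-finite measure space, 1 ≤ p < ∞, and let T > 1, α > 0 with αp = Q for some Q > 0. Suppose f : ℝ → [0,∞] and g : ℝ → [0,∞] are the distribution functions of measurable functions u on a 'fundamental domain' and on the whole space respectively, related by g(λ) = ∑_{k∈ℤ} T^{Qk} f(λ T^{αk}) for all λ > 0. Then for every λ > 0, p∫₀^∞ ξ^{p−1} f(ξ) dξ ≥ ((T^Q − 1)/T^Q) λ^p g(λ). In particular, ((T^Q−1)/T^Q)^{1/p} sup_{λ>0} λ g(λ)^{1/p} ≤ (p∫₀^∞ ξ^{p−1} f(ξ)dξ)^{1/p}. -/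
open MeasureTheory ENNReal Set

theorem stmt_1 (T Q α p : ℝ) (hT : 1 < T) (hQ : 0 < Q) (hα : 0 < α)
    (hp : 1 ≤ p) (hαp : α * p = Q)
    (f g : ℝ → ℝ≥0∞)
    (hf : ∀ ⦃a b : ℝ⦄, 0 < a → a ≤ b → f b ≤ f a)
    (hg : ∀ ⦃a b : ℝ⦄, 0 < a → a ≤ b → g b ≤ g a)
    (hfg : ∀ l : ℝ, 0 < l →
      g l = ∑' k : ℤ, ENNReal.ofReal (T ^ (Q * (k : ℝ))) * f (l * T ^ (α * (k : ℝ)))) :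
    (∀ l : ℝ, 0 < l →
      ENNReal.ofReal ((T ^ Q - 1) / T ^ Q) * ENNReal.ofReal (l ^ p) * g l ≤
        ENNReal.ofReal p * ∫⁻ ξ in Ioi (0 : ℝ), ENNReal.ofReal (ξ ^ (p - 1)) * f ξ) ∧
    ENNReal.ofReal ((T ^ Q - 1) / T ^ Q) ^ (1 / p) *
        (⨆ l ∈ Ioi (0 : ℝ), ENNReal.ofReal l * (g l) ^ (1 / p)) ≤
      (ENNReal.ofReal p * ∫⁻ ξ in Ioi (0 : ℝ), ENNReal.ofReal (ξ ^ (p - 1)) * f ξ) ^ (1 / p) := by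
  have hp0 : (0:ℝ) < p := one_pos.trans_le hp
  have hT0 : (0:ℝ) < T := one_pos.trans hT
  have hTQ : (0:ℝ) < T ^ Q := Real.rpow_pos_of_pos hT0 Q
  have hcc : (T ^ Q - 1) / T ^ Q = 1 - T ^ (-Q) := by
    rw [Real.rpow_neg hT0.le]
    field_simp
  have hcnn : (0:ℝ) ≤ 1 - T ^ (-Q) := by
    have : T ^ (-Q) ≤ T ^ (0:ℝ) :=
      (Real.rpow_le_rpow_left_iff hT).2 (by linarith)
    rw [Real.rpow_zero] at this
    linarith
  have key : ∀ l : ℝ, 0 < l →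
      ENNReal.ofReal ((T ^ Q - 1) / T ^ Q) * ENNReal.ofReal (l ^ p) * g l ≤
        ENNReal.ofReal p * ∫⁻ ξ in Ioi (0 : ℝ), ENNReal.ofReal (ξ ^ (p - 1)) * f ξ := by
    intro l hl
    set ξ : ℤ → ℝ := fun k => l * T ^ (α * (k : ℝ)) with hξ
    have hξpos : ∀ k : ℤ, 0 < ξ k := fun k =>
      mul_pos hl (Real.rpow_pos_of_pos hT0 _)
    have hξmono : ∀ ⦃i j : ℤ⦄, i ≤ j → ξ i ≤ ξ j := by
      intro i j hij
      exact mul_le_mul_of_nonneg_left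
        ((Real.rpow_le_rpow_left_iff hT).2
          (mul_le_mul_of_nonneg_left (by exact_mod_cast hij) hα.le)) hl.le
    set A : ℤ → Set ℝ := fun k => Ioc (ξ (k - 1)) (ξ k) with hA
    have hAm : ∀ k, MeasurableSet (A k) := fun k => measurableSet_Ioc
    have hAd : Pairwise (Function.onFun Disjoint A) := by
      intro i j hij
      rcases hij.lt_or_gt with h | h
      · refine Set.Ioc_disjoint_Ioc.2 ?_
        exact le_trans (min_le_left _ _)
          (le_trans (hξmono (by omega)) (le_max_right _ _))
      · refine Set.Ioc_disjoint_Ioc.2 ?_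
        exact le_trans (min_le_right _ _)
          (le_trans (hξmono (by omega)) (le_max_left _ _))
    have hAsub : (⋃ k, A k) ⊆ Ioi (0:ℝ) := by
      rintro x hx
      rcases Set.mem_iUnion.1 hx with ⟨k, hk⟩
      exact lt_trans (hξpos (k - 1)) hk.1
    -- the per-interval lower bound
    have hterm : ∀ k : ℤ,
        ENNReal.ofReal ((ξ k ^ p - ξ (k - 1) ^ p) / p) * f (ξ k) ≤
          ∫⁻ x in A k, ENNReal.ofReal (x ^ (p - 1)) * f x := by
      intro k
      have ha : 0 < ξ (k - 1) := hξpos _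
      have hab : ξ (k - 1) < ξ k := by
        have := hξmono (show (k - 1 : ℤ) ≤ k by omega)
        rcases lt_or_eq_of_le this with h | h
        · exact h
        · exfalso
          have : T ^ (α * ((k:ℝ) - 1)) < T ^ (α * (k:ℝ)) := by
            apply Real.rpow_lt_rpow_left_iff hT |>.2
            nlinarith
          have h' : ξ (k - 1) < ξ k := by
            simp only [hξ]
            push_cast
            exact mul_lt_mul_of_pos_left this hl
          exact absurd h h'.ne
      have hmeas : Measurable fun x : ℝ => ENNReal.ofReal (x ^ (p - 1)) :=
        (Real.continuous_rpow_const (by linarith : (0:ℝ) ≤ p - 1)).measurable.ennreal_ofReal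
      have hint : ∫⁻ x in A k, ENNReal.ofReal (x ^ (p - 1)) =
          ENNReal.ofReal ((ξ k ^ p - ξ (k - 1) ^ p) / p) := by
        have hii : IntervalIntegrable (fun x : ℝ => x ^ (p - 1)) volume (ξ (k-1)) (ξ k) :=
          intervalIntegral.intervalIntegrable_rpow (Or.inl (by linarith))
        have hInt : IntegrableOn (fun x : ℝ => x ^ (p - 1)) (A k) volume := by
          rw [hA]
          exact (intervalIntegrable_iff_integrableOn_Ioc_of_le hab.le).1 hii
        rw [← ofReal_integral_eq_lintegral_ofReal hInt]
        · congr 1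
          rw [hA, ← intervalIntegral.integral_of_le hab.le,
            integral_rpow (Or.inl (by linarith)), sub_add_cancel]
        · refine (ae_restrict_iff' (hAm k)).2 (ae_of_all _ fun x hx => ?_)
          exact Real.rpow_nonneg (le_of_lt (lt_trans ha hx.1)) _
      calc ENNReal.ofReal ((ξ k ^ p - ξ (k - 1) ^ p) / p) * f (ξ k)
          = (∫⁻ x in A k, ENNReal.ofReal (x ^ (p - 1))) * f (ξ k) := by rw [hint]
        _ = ∫⁻ x in A k, ENNReal.ofReal (x ^ (p - 1)) * f (ξ k) :=
            (lintegral_mul_const (f (ξ k)) hmeas).symm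
        _ ≤ ∫⁻ x in A k, ENNReal.ofReal (x ^ (p - 1)) * f x := by
            refine setLIntegral_mono' (hAm k) fun x hx => ?_
            exact mul_le_mul_right (hf (lt_trans ha hx.1) hx.2) _
    -- identify the interval endpoint differences
    have hdiff : ∀ k : ℤ, (ξ k ^ p - ξ (k - 1) ^ p) / p =
        ((1 - T ^ (-Q)) * l ^ p / p) * T ^ (Q * (k:ℝ)) := by
      intro k
      have h1 : ξ k ^ p = l ^ p * T ^ (Q * (k:ℝ)) := by
        rw [hξ]
        simp only
        rw [Real.mul_rpow hl.le (Real.rpow_pos_of_pos hT0 _).le, ← Real.rpow_mul hT0.le]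
        congr 1
        rw [← hαp]; ring
      have h2 : ξ (k - 1) ^ p = l ^ p * (T ^ (Q * (k:ℝ)) * T ^ (-Q)) := by
        rw [hξ]
        push_cast
        rw [Real.mul_rpow hl.le (Real.rpow_pos_of_pos hT0 _).le,
          ← Real.rpow_mul hT0.le, ← Real.rpow_add hT0]
        congr 1
        rw [← hαp]; ring
      rw [h1, h2]
      ring
    -- sum up
    have hsum : ENNReal.ofReal ((1 - T ^ (-Q)) * l ^ p / p) * g l ≤
        ∫⁻ x in Ioi (0:ℝ), ENNReal.ofReal (x ^ (p - 1)) * f x := by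
      have hTk : ∀ k : ℤ, (0:ℝ) ≤ T ^ (Q * (k:ℝ)) := fun k =>
        (Real.rpow_pos_of_pos hT0 _).le
      have hconst : (0:ℝ) ≤ (1 - T ^ (-Q)) * l ^ p / p := by
        have := Real.rpow_nonneg hl.le p
        positivity
      calc ENNReal.ofReal ((1 - T ^ (-Q)) * l ^ p / p) * g l
          = ∑' k : ℤ, ENNReal.ofReal ((1 - T ^ (-Q)) * l ^ p / p) *
              (ENNReal.ofReal (T ^ (Q * (k:ℝ))) * f (l * T ^ (α * (k:ℝ)))) := by
            rw [hfg l hl, ENNReal.tsum_mul_left]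
        _ = ∑' k : ℤ, ENNReal.ofReal ((ξ k ^ p - ξ (k - 1) ^ p) / p) * f (ξ k) := by
            refine tsum_congr fun k => ?_
            rw [hdiff k, ENNReal.ofReal_mul hconst, mul_assoc]
        _ ≤ ∑' k : ℤ, ∫⁻ x in A k, ENNReal.ofReal (x ^ (p - 1)) * f x :=
            ENNReal.tsum_le_tsum hterm
        _ = ∫⁻ x in ⋃ k, A k, ENNReal.ofReal (x ^ (p - 1)) * f x :=
            (lintegral_iUnion hAm hAd _).symm
        _ ≤ ∫⁻ x in Ioi (0:ℝ), ENNReal.ofReal (x ^ (p - 1)) * f x :=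
            lintegral_mono_set hAsub
    calc ENNReal.ofReal ((T ^ Q - 1) / T ^ Q) * ENNReal.ofReal (l ^ p) * g l
        = ENNReal.ofReal p * (ENNReal.ofReal ((1 - T ^ (-Q)) * l ^ p / p) * g l) := by
          rw [hcc, ← mul_assoc, ← ENNReal.ofReal_mul hp0.le, ← ENNReal.ofReal_mul hcnn]
          congr 2
          field_simp
      _ ≤ ENNReal.ofReal p * ∫⁻ x in Ioi (0:ℝ), ENNReal.ofReal (x ^ (p - 1)) * f x :=
          mul_le_mul_right hsum _
  refine ⟨key, ?_⟩
  rw [ENNReal.mul_iSup]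
  refine iSup_le fun l => ?_
  rw [ENNReal.mul_iSup]
  refine iSup_le fun hl => ?_
  have hl' : (0:ℝ) < l := hl
  have heq : ENNReal.ofReal ((T ^ Q - 1) / T ^ Q) ^ (1 / p) *
      (ENNReal.ofReal l * g l ^ (1 / p)) =
      (ENNReal.ofReal ((T ^ Q - 1) / T ^ Q) * ENNReal.ofReal (l ^ p) * g l) ^ (1 / p) := by
    rw [ENNReal.mul_rpow_of_nonneg _ _ (by positivity : (0:ℝ) ≤ 1/p),
      ENNReal.mul_rpow_of_nonneg _ _ (by positivity : (0:ℝ) ≤ 1/p),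
      ← ENNReal.ofReal_rpow_of_pos hl', ← ENNReal.rpow_mul,
      mul_one_div_cancel hp0.ne', ENNReal.rpow_one, mul_assoc]
  rw [heq]
  exact ENNReal.rpow_le_rpow (key l hl') (by positivity)
end

section
/- With the same hypotheses as above (g(λ) = ∑_{k∈ℤ} T^{Qk} f(λT^{αk}), αp = Q, T > 1), for every positive integer N it holds that p∫₀^∞ ξ^{p−1} f(ξ) dξ ≤ N(T^{Q/N} − 1) · sup_{λ>0} λ^p g(λ). Consequently, letting N → ∞, p∫₀^∞ ξ^{p−1} f(ξ)dξ ≤ Q·log(T) · sup_{λ>0} λ^p g(λ). -/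
/-!
Cut `(0, ∞)` at the powers of `c = T ^ (α / N)`. On `(c ^ m, c ^ (m + 1)]` the monotonicity of
`f` gives `p ∫ ξ ^ (p - 1) f ξ ≤ (c ^ p - 1) · (c ^ m) ^ p f (c ^ m)`, and `c ^ p = T ^ (Q / N)`.
Grouping the indices `m` by their residue `r` mod `N` and using `c ^ N = T ^ α`, the sum over each
residue class is `λ ^ p g λ` at `λ = c ^ r`, so the whole sum is at most `N` times the weak
quasinorm. Finally `N (T ^ (Q / N) - 1) → Q log T`.
-/

open MeasureTheory ENNReal Set Filter Topology

lemma ofReal_mul_setLIntegral_Ioc_rpow_sub_one {p a b : ℝ} (hp : 0 < p) (ha : 0 < a)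
    (hab : a ≤ b) :
    ENNReal.ofReal p * ∫⁻ ξ in Ioc a b, ENNReal.ofReal (ξ ^ (p - 1)) =
      ENNReal.ofReal (b ^ p - a ^ p) := by
  have hint : IntegrableOn (fun ξ : ℝ => ξ ^ (p - 1)) (Ioc a b) :=
    (ContinuousOn.integrableOn_Icc fun x hx =>
      (Real.continuousAt_rpow_const x _ (Or.inl (ha.trans_le hx.1).ne')).continuousWithinAt
      ).mono_set Ioc_subset_Icc_self
  have hnonneg : 0 ≤ᵐ[volume.restrict (Ioc a b)] fun ξ : ℝ => ξ ^ (p - 1) := by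
    filter_upwards [ae_restrict_mem measurableSet_Ioc] with x hx
    exact Real.rpow_nonneg (ha.trans hx.1).le _
  rw [← ofReal_integral_eq_lintegral_ofReal hint hnonneg, ← ENNReal.ofReal_mul hp.le,
    ← intervalIntegral.integral_of_le hab,
    integral_rpow (Or.inr ⟨by linarith, notMem_uIcc_of_lt ha (ha.trans_le hab)⟩),
    sub_add_cancel, mul_div_cancel₀ _ hp.ne']

lemma ofReal_mul_lintegral_rpow_sub_one_mul_le_tsum_zpow {p c : ℝ} (hp : 0 < p) (hc : 1 < c)
    {f : ℝ → ℝ≥0∞} (hf : AntitoneOn f (Ioi 0)) :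
    ENNReal.ofReal p * ∫⁻ ξ in Ioi 0, ENNReal.ofReal (ξ ^ (p - 1)) * f ξ ≤
      ENNReal.ofReal (c ^ p - 1) * ∑' m : ℤ, ENNReal.ofReal ((c ^ m) ^ p) * f (c ^ m) := by
  have hc0 : 0 < c := one_pos.trans hc
  have hmeas : Measurable fun ξ : ℝ => ENNReal.ofReal (ξ ^ (p - 1)) :=
    (measurable_id.pow_const _).ennreal_ofReal
  have hcover : Ioi (0 : ℝ) ⊆ ⋃ m : ℤ, Ioc (c ^ m) (c ^ (m + 1)) := fun x hx =>
    mem_iUnion.2 (exists_mem_Ioc_zpow hx hc)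
  have hpiece : ∀ m : ℤ, ENNReal.ofReal p *
      ∫⁻ ξ in Ioc (c ^ m) (c ^ (m + 1)), ENNReal.ofReal (ξ ^ (p - 1)) * f ξ ≤
        ENNReal.ofReal (c ^ p - 1) * (ENNReal.ofReal ((c ^ m) ^ p) * f (c ^ m)) := by
    intro m
    have hm : 0 < c ^ m := zpow_pos hc0 m
    calc ENNReal.ofReal p * ∫⁻ ξ in Ioc (c ^ m) (c ^ (m + 1)), ENNReal.ofReal (ξ ^ (p - 1)) * f ξ
        ≤ ENNReal.ofReal p *
            ∫⁻ ξ in Ioc (c ^ m) (c ^ (m + 1)), ENNReal.ofReal (ξ ^ (p - 1)) * f (c ^ m) := by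
          gcongr 1
          exact setLIntegral_mono (hmeas.mul_const _) fun ξ hξ =>
            mul_le_mul_right (hf hm (hm.trans hξ.1) hξ.1.le) _
      _ = ENNReal.ofReal ((c ^ (m + 1)) ^ p - (c ^ m) ^ p) * f (c ^ m) := by
          rw [lintegral_mul_const _ hmeas, ← mul_assoc,
            ofReal_mul_setLIntegral_Ioc_rpow_sub_one hp hm
              (zpow_le_zpow_right₀ hc.le (Int.le_add_one le_rfl))]
      _ = ENNReal.ofReal (c ^ p - 1) * (ENNReal.ofReal ((c ^ m) ^ p) * f (c ^ m)) := by
          rw [zpow_add_one₀ hc0.ne', Real.mul_rpow hm.le hc0.le, ← mul_assoc,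
            ← ENNReal.ofReal_mul (sub_nonneg.2 (Real.one_le_rpow hc.le hp.le))]
          ring_nf
  calc ENNReal.ofReal p * ∫⁻ ξ in Ioi 0, ENNReal.ofReal (ξ ^ (p - 1)) * f ξ
      ≤ ENNReal.ofReal p *
          ∑' m : ℤ, ∫⁻ ξ in Ioc (c ^ m) (c ^ (m + 1)), ENNReal.ofReal (ξ ^ (p - 1)) * f ξ := by
        gcongr
        exact (lintegral_mono_set hcover).trans (lintegral_iUnion_le _ _)
    _ ≤ ENNReal.ofReal (c ^ p - 1) * ∑' m : ℤ, ENNReal.ofReal ((c ^ m) ^ p) * f (c ^ m) := by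
        rw [← ENNReal.tsum_mul_left, ← ENNReal.tsum_mul_left]
        exact ENNReal.tsum_le_tsum hpiece

lemma ENNReal.tsum_int_eq_sum_fin_tsum (N : ℕ) [NeZero N] (F : ℤ → ℝ≥0∞) :
    ∑' m : ℤ, F m = ∑ r : Fin N, ∑' k : ℤ, F (k * N + r) := by
  rw [← (Int.divModEquiv N).symm.tsum_eq, ENNReal.tsum_prod', ENNReal.tsum_comm, tsum_fintype]
  simp only [Int.divModEquiv_symm_apply]

lemma tsum_zpow_le_mul_iSup_tsum {c : ℝ} (hc : 0 < c) (N : ℕ) [NeZero N] (φ : ℝ → ℝ≥0∞) :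
    ∑' m : ℤ, φ (c ^ m) ≤ N * ⨆ l ∈ Ioi (0 : ℝ), ∑' k : ℤ, φ (l * (c ^ N) ^ k) := by
  have hresidue : ∀ r : Fin N, ∑' k : ℤ, φ (c ^ (k * N + r : ℤ)) ≤
      ⨆ l ∈ Ioi (0 : ℝ), ∑' k : ℤ, φ (l * (c ^ N) ^ k) := by
    intro r
    refine le_iSup₂_of_le (c ^ (r : ℕ)) (pow_pos hc _) (le_of_eq ?_)
    congr! 2 with k
    rw [zpow_add₀ hc.ne', mul_comm (k : ℤ), zpow_mul, zpow_natCast, zpow_natCast, mul_comm]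
  calc ∑' m : ℤ, φ (c ^ m) ≤ ∑ _r : Fin N, ⨆ l ∈ Ioi (0 : ℝ), ∑' k : ℤ, φ (l * (c ^ N) ^ k) := by
        rw [ENNReal.tsum_int_eq_sum_fin_tsum N]
        exact Finset.sum_le_sum fun r _ => hresidue r
    _ = N * ⨆ l ∈ Ioi (0 : ℝ), ∑' k : ℤ, φ (l * (c ^ N) ^ k) := by
        rw [Finset.sum_const, Finset.card_univ, Fintype.card_fin, nsmul_eq_mul]

lemma ofReal_rpow_mul_eq_tsum_dilate {T Q α p : ℝ} (hT : 0 < T) (hαp : α * p = Q)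
    {f g : ℝ → ℝ≥0∞}
    (hfg : ∀ l : ℝ, 0 < l →
      g l = ∑' k : ℤ, ENNReal.ofReal (T ^ (Q * (k : ℝ))) * f (l * T ^ (α * (k : ℝ))))
    {l : ℝ} (hl : 0 < l) :
    ENNReal.ofReal (l ^ p) * g l =
      ∑' k : ℤ, ENNReal.ofReal ((l * (T ^ α) ^ k) ^ p) * f (l * (T ^ α) ^ k) := by
  rw [hfg l hl, ← ENNReal.tsum_mul_left]
  refine tsum_congr fun k => ?_
  have hTk : (T ^ α) ^ k = T ^ (α * k) := by rw [← Real.rpow_intCast, ← Real.rpow_mul hT.le]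
  have hTkp : (T ^ (α * k)) ^ p = T ^ (Q * k) := by
    rw [← Real.rpow_mul hT.le, ← hαp, mul_right_comm]
  rw [hTk, Real.mul_rpow hl.le (Real.rpow_nonneg hT.le _), hTkp,
    ENNReal.ofReal_mul (Real.rpow_nonneg hl.le _), mul_assoc]

lemma ofReal_mul_lintegral_le_nat_mul_iSup {T Q α p : ℝ} (hT : 1 < T) (hQ : 0 < Q) (hα : 0 < α)
    (hαp : α * p = Q) {f g : ℝ → ℝ≥0∞} (hf : AntitoneOn f (Ioi 0))
    (hfg : ∀ l : ℝ, 0 < l →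
      g l = ∑' k : ℤ, ENNReal.ofReal (T ^ (Q * (k : ℝ))) * f (l * T ^ (α * (k : ℝ))))
    {N : ℕ} (hN : 0 < N) :
    ENNReal.ofReal p * ∫⁻ ξ in Ioi (0 : ℝ), ENNReal.ofReal (ξ ^ (p - 1)) * f ξ ≤
      ENNReal.ofReal ((N : ℝ) * (T ^ (Q / (N : ℝ)) - 1)) *
        ⨆ l ∈ Ioi (0 : ℝ), ENNReal.ofReal (l ^ p) * g l := by
  have : NeZero N := ⟨hN.ne'⟩
  have hT0 : 0 < T := one_pos.trans hT
  have hp : 0 < p := pos_of_mul_pos_right (hαp ▸ hQ) hα.le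
  set c := T ^ (α / N)
  have hc : 1 < c := Real.one_lt_rpow hT (div_pos hα (Nat.cast_pos.2 hN))
  have hcN : c ^ N = T ^ α := by
    rw [← Real.rpow_natCast, ← Real.rpow_mul hT0.le, div_mul_cancel₀ _ (Nat.cast_ne_zero.2 hN.ne')]
  have hcp : c ^ p = T ^ (Q / N) := by
    rw [← Real.rpow_mul hT0.le, ← hαp, div_mul_eq_mul_div, mul_comm α]
  calc ENNReal.ofReal p * ∫⁻ ξ in Ioi (0 : ℝ), ENNReal.ofReal (ξ ^ (p - 1)) * f ξ
      ≤ ENNReal.ofReal (c ^ p - 1) * ∑' m : ℤ, ENNReal.ofReal ((c ^ m) ^ p) * f (c ^ m) :=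
        ofReal_mul_lintegral_rpow_sub_one_mul_le_tsum_zpow hp hc hf
    _ ≤ ENNReal.ofReal (c ^ p - 1) * (N * ⨆ l ∈ Ioi (0 : ℝ),
          ∑' k : ℤ, ENNReal.ofReal ((l * (c ^ N) ^ k) ^ p) * f (l * (c ^ N) ^ k)) := by
        gcongr
        exact tsum_zpow_le_mul_iSup_tsum (one_pos.trans hc) N fun x => ENNReal.ofReal (x ^ p) * f x
    _ = ENNReal.ofReal ((N : ℝ) * (T ^ (Q / (N : ℝ)) - 1)) *
          ⨆ l ∈ Ioi (0 : ℝ), ENNReal.ofReal (l ^ p) * g l := by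
        rw [hcN, hcp, ENNReal.ofReal_mul (Nat.cast_nonneg N), ofReal_natCast, mul_left_comm,
          mul_assoc]
        congr 2
        exact iSup_congr fun l => iSup_congr fun hl =>
          (ofReal_rpow_mul_eq_tsum_dilate hT0 hαp hfg hl).symm

lemma tendsto_nat_mul_rpow_div_sub_one {x : ℝ} (hx : 0 < x) (a : ℝ) :
    Tendsto (fun N : ℕ => (N : ℝ) * (x ^ (a / N) - 1)) atTop (𝓝 (a * Real.log x)) := by
  have h := (tendsto_rpow_sub_one_log (Real.rpow_pos_of_pos hx a)).comp
    (tendsto_inv_atTop_nhdsGT_zero.comp tendsto_natCast_atTop_atTop)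
  simpa [Function.comp_def, ← Real.rpow_mul hx.le, Real.log_rpow hx, div_eq_mul_inv] using h

theorem stmt_2_general (T Q α p : ℝ) (hT : 1 < T) (hQ : 0 < Q) (hα : 0 < α)
    (hαp : α * p = Q)
    (f g : ℝ → ℝ≥0∞)
    (hf : ∀ ⦃a b : ℝ⦄, 0 < a → a ≤ b → f b ≤ f a)
    (hfg : ∀ l : ℝ, 0 < l →
      g l = ∑' k : ℤ, ENNReal.ofReal (T ^ (Q * (k : ℝ))) * f (l * T ^ (α * (k : ℝ)))) :
    (∀ N : ℕ, 0 < N →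
      ENNReal.ofReal p * ∫⁻ ξ in Ioi (0 : ℝ), ENNReal.ofReal (ξ ^ (p - 1)) * f ξ ≤
        ENNReal.ofReal ((N : ℝ) * (T ^ (Q / (N : ℝ)) - 1)) *
          ⨆ l ∈ Ioi (0 : ℝ), ENNReal.ofReal (l ^ p) * g l) ∧
    ENNReal.ofReal p * ∫⁻ ξ in Ioi (0 : ℝ), ENNReal.ofReal (ξ ^ (p - 1)) * f ξ ≤
      ENNReal.ofReal (Q * Real.log T) * ⨆ l ∈ Ioi (0 : ℝ), ENNReal.ofReal (l ^ p) * g l := by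
  have hbound := fun (N : ℕ) (hN : 0 < N) =>
    ofReal_mul_lintegral_le_nat_mul_iSup hT hQ hα hαp (fun a ha _ _ hab => hf ha hab) hfg hN
  refine ⟨hbound, ge_of_tendsto ?_ ((eventually_gt_atTop 0).mono hbound)⟩
  refine ENNReal.Tendsto.mul_const ?_
    (Or.inl (ENNReal.ofReal_pos.2 (mul_pos hQ (Real.log_pos hT))).ne')
  exact (ENNReal.continuous_ofReal.tendsto _).comp
    (tendsto_nat_mul_rpow_div_sub_one (one_pos.trans hT) Q)

theorem stmt_2 (T Q α p : ℝ) (hT : 1 < T) (hQ : 0 < Q) (hα : 0 < α)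
    (hp : 1 ≤ p) (hαp : α * p = Q)
    (f g : ℝ → ℝ≥0∞)
    (hf : ∀ ⦃a b : ℝ⦄, 0 < a → a ≤ b → f b ≤ f a)
    (hg : ∀ ⦃a b : ℝ⦄, 0 < a → a ≤ b → g b ≤ g a)
    (hfg : ∀ l : ℝ, 0 < l →
      g l = ∑' k : ℤ, ENNReal.ofReal (T ^ (Q * (k : ℝ))) * f (l * T ^ (α * (k : ℝ))))
    (hfin : (⨆ l ∈ Ioi (0 : ℝ), ENNReal.ofReal (l ^ p) * g l) ≠ ⊤) :
    (∀ N : ℕ, 0 < N →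
      ENNReal.ofReal p * ∫⁻ ξ in Ioi (0 : ℝ), ENNReal.ofReal (ξ ^ (p - 1)) * f ξ ≤
        ENNReal.ofReal ((N : ℝ) * (T ^ (Q / (N : ℝ)) - 1)) *
          ⨆ l ∈ Ioi (0 : ℝ), ENNReal.ofReal (l ^ p) * g l) ∧
    ENNReal.ofReal p * ∫⁻ ξ in Ioi (0 : ℝ), ENNReal.ofReal (ξ ^ (p - 1)) * f ξ ≤
      ENNReal.ofReal (Q * Real.log T) * ⨆ l ∈ Ioi (0 : ℝ), ENNReal.ofReal (l ^ p) * g l :=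
  stmt_2_general T Q α p hT hQ hα hαp f g hf hfg
end
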